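/- arXiv:1307.1138 — 2 statements merged into one kernel-verified Lean document; each statement's English description precedes it below -/
import Mathlib

section
/- Let (G_A, σ) be a symmetric Banach-Lie group with involutive subgroup G_B (i.e., σ(G_B) = G_B) such that G_A^+ ∩ G_B = G_B^+, where G^+ := {g σ(g)^{-1} : g ∈ G} and U_Λ = Fix(σ|_{G_Λ}). Then the map λ : U_A/U_B → G_A/G_B, u U_B ↦ u G_B, has image exactly the fixed-point set of the involution σ_G : g G_B ↦ σ(g) G_B on G_A/G_B. -/
/-!
Writing `g⁻¹ σ(g) = x σ(x)⁻¹` with `x = g⁻¹` shows that the condition `g⁻¹ σ(g) ∈ B` places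
`g⁻¹ σ(g)` in `G⁺ ∩ B = B⁺`, so `g⁻¹ σ(g) = w σ(w)⁻¹` for some `w ∈ B`, and then `u = g w` is a
`σ`-fixed point of the coset `g B`. Conversely, if `u ∈ g B` is fixed then
`g⁻¹ σ(g) = b σ(b)⁻¹` with `b = g⁻¹ u ∈ B`, which lies in `B` as `B` is `σ`-invariant.
-/

section TwistedConjugation

variable {G : Type*} [Group G] (σ : G →* G)

lemma map_mul_eq_self_of_inv_mul_map_eq {g w : G} (h : g⁻¹ * σ g = w * (σ w)⁻¹) :
    σ (g * w) = g * w := by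
  have hσg : σ g = g * w * (σ w)⁻¹ := by rw [mul_assoc, ← h, mul_inv_cancel_left]
  rw [map_mul, hσg, inv_mul_cancel_right]

lemma inv_mul_map_eq_of_map_eq_self {g u : G} (hu : σ u = u) :
    g⁻¹ * σ g = (g⁻¹ * u) * (σ (g⁻¹ * u))⁻¹ := by
  rw [map_mul, map_inv, hu]
  group

end TwistedConjugation

theorem stmt_14_general (G : Type*) [Group G] (σ : G →* G)
    (B : Subgroup G) (hBinv : ∀ b ∈ B, σ b ∈ B)
    (hpos : ∀ h ∈ B, (∃ x : G, h = x * (σ x)⁻¹) → ∃ w ∈ B, h = w * (σ w)⁻¹) :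
    ∀ g : G, g⁻¹ * σ g ∈ B ↔ ∃ u : G, σ u = u ∧ g⁻¹ * u ∈ B := by
  intro g
  constructor
  · intro hg
    obtain ⟨w, hwB, hw⟩ := hpos _ hg ⟨g⁻¹, by rw [map_inv, inv_inv]⟩
    exact ⟨g * w, map_mul_eq_self_of_inv_mul_map_eq σ hw, by rwa [inv_mul_cancel_left]⟩
  · rintro ⟨u, hu, hb⟩
    rw [inv_mul_map_eq_of_map_eq_self σ hu]
    exact B.mul_mem hb (B.inv_mem (hBinv _ hb))

/-- Let `(G, σ)` be a symmetric group with σ-invariant subgroup `B` such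
that `G⁺ ∩ B = B⁺` (every element of `B` of the form `x σ(x)⁻¹` is of the form
`w σ(w)⁻¹` with `w ∈ B`). Then a coset `g B` is fixed by the involution
`σ_G : g B ↦ σ(g) B` (equivalently `g⁻¹ σ(g) ∈ B`) if and only if it lies in the image
of `λ : U_A/U_B → G_A/G_B`, i.e. iff `g B = u B` for some `u` with `σ(u) = u`. -/
theorem stmt_14 (G : Type*) [Group G] (σ : G →* G) (hσ : ∀ x : G, σ (σ x) = x)
    (B : Subgroup G) (hBinv : ∀ b ∈ B, σ b ∈ B)
    (hpos : ∀ h ∈ B, (∃ x : G, h = x * (σ x)⁻¹) → ∃ w ∈ B, h = w * (σ w)⁻¹) :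
    ∀ g : G, g⁻¹ * σ g ∈ B ↔ ∃ u : G, σ u = u ∧ g⁻¹ * u ∈ B :=
  stmt_14_general G σ B hBinv hpos
end

section
/- Let A be a unital C*-algebra, B ⊆ A a unital C*-subalgebra, E : A → B a conditional expectation. Suppose the maps (u,X,Y) ↦ u e^X e^Y from U_A × p_E × p_B to G_A is bijective, where p_E is the set of self-adjoint elements of ker E and p_B the self-adjoint elements of B. Then the map (X,Y) ↦ e^Y e^{2X} e^Y from p_E × p_B to the set of positive invertible elements of A is bijective. -/
/-!
Write `g = e^X e^Y`. For self-adjoint `X, Y` one has `g* g = e^Y e^{2X} e^Y`, and multiplying `g`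
on the left by a unitary does not change `g* g`. A positive invertible `x x*` is `g* g` for the
`g` obtained by decomposing `x* = u e^X e^Y` with `Φ`, which gives surjectivity. Conversely two
invertible `g, g'` with `g* g = g'* g'` satisfy `g = u g'` for the unitary `u = g g'⁻¹`, so
`Φ(u, X', Y') = Φ(1, X, Y)` and the injectivity of `Φ` gives injectivity.
-/

open NormedSpace

theorem exists_mem_unitary_mul_eq_of_star_mul_self_eq {R : Type*} [Monoid R] [StarMul R]
    {g h : R} (hg : IsUnit g) (hh : IsUnit h) (heq : star g * g = star h * h) :
    ∃ u ∈ unitary R, u * h = g := by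
  lift g to Rˣ using hg
  lift h to Rˣ using hh
  have hunits : g * h⁻¹ ∈ unitary Rˣ :=
    (Unitary.mul_inv_mem_iff g h).mpr (Units.ext heq)
  rw [Units.unitary_eq] at hunits
  exact ⟨_, hunits, by simp⟩

theorem star_mul_self_unitary_mul {R : Type*} [Monoid R] [StarMul R] {u : R}
    (hu : u ∈ unitary R) (g : R) : star (u * g) * (u * g) = star g * g := by
  rw [star_mul, mul_assoc, ← mul_assoc (star u), Unitary.star_mul_self_of_mem hu, one_mul]

theorem star_mul_self_exp_mul_exp {A : Type*} [NormedRing A] [NormedAlgebra ℚ A]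
    [CompleteSpace A] [StarRing A] [ContinuousStar A] {X Y : A}
    (hX : IsSelfAdjoint X) (hY : IsSelfAdjoint Y) :
    star (exp X * exp Y) * (exp X * exp Y) = exp Y * exp (2 • X) * exp Y := by
  rw [star_mul, star_exp, star_exp, hX.star_eq, hY.star_eq, two_smul,
    exp_add_of_commute (Commute.refl X)]
  simp only [mul_assoc]

theorem stmt_16_general (A : Type*) [NormedRing A] [StarRing A] [CStarRing A]
    [NormedAlgebra ℂ A] [CompleteSpace A] [StarModule ℂ A]
    (B : StarSubalgebra ℂ A) (E : A →ₗ[ℂ] A)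
    (hΦ : Set.BijOn
      (fun t : A × A × A => t.1 * NormedSpace.exp t.2.1 * NormedSpace.exp t.2.2)
      ((unitary A : Set A) ×ˢ {X : A | E X = 0 ∧ IsSelfAdjoint X} ×ˢ
        {Y : A | Y ∈ B ∧ IsSelfAdjoint Y})
      {x : A | IsUnit x}) :
    Set.BijOn
      (fun t : A × A =>
        NormedSpace.exp t.2 * NormedSpace.exp (2 • t.1) * NormedSpace.exp t.2)
      ({X : A | E X = 0 ∧ IsSelfAdjoint X} ×ˢ {Y : A | Y ∈ B ∧ IsSelfAdjoint Y})
      {h : A | ∃ x : A, IsUnit x ∧ h = x * star x} := by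
  let +nondep : NormedAlgebra ℚ A := .restrictScalars ℚ ℂ A
  have isUnit_exp_mul_exp (X Y : A) : IsUnit (exp X * exp Y) := (isUnit_exp X).mul (isUnit_exp Y)
  refine ⟨?mapsTo, ?injOn, ?surjOn⟩
  case mapsTo =>
    rintro ⟨X, Y⟩ ⟨⟨-, hX⟩, -, hY⟩
    exact ⟨star (exp X * exp Y), (isUnit_exp_mul_exp X Y).star,
      by rw [star_star, star_mul_self_exp_mul_exp hX hY]⟩
  case injOn =>
    rintro ⟨X, Y⟩ hXY ⟨X', Y'⟩ hXY' heq
    obtain ⟨u, hu, hug⟩ := exists_mem_unitary_mul_eq_of_star_mul_self_eq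
      (isUnit_exp_mul_exp X Y) (isUnit_exp_mul_exp X' Y') (by
        rw [star_mul_self_exp_mul_exp hXY.1.2 hXY.2.2, star_mul_self_exp_mul_exp hXY'.1.2 hXY'.2.2]
        exact heq)
    have htriple :=
      hΦ.injOn (x₁ := (u, X', Y')) ⟨hu, hXY'⟩ (x₂ := (1, X, Y)) ⟨one_mem _, hXY⟩
        (by simp only [one_mul, mul_assoc, hug])
    simp only [Prod.mk.injEq] at htriple ⊢
    exact ⟨htriple.2.1.symm, htriple.2.2.symm⟩
  case surjOn =>
    rintro _ ⟨x, hx, rfl⟩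
    obtain ⟨⟨u, X, Y⟩, ⟨hu, hX, hY⟩, hx'⟩ := hΦ.surjOn hx.star
    dsimp only at hx'
    refine ⟨(X, Y), ⟨hX, hY⟩, ?_⟩
    calc exp Y * exp (2 • X) * exp Y = star (exp X * exp Y) * (exp X * exp Y) :=
          (star_mul_self_exp_mul_exp hX.2 hY.2).symm
      _ = star (u * exp X * exp Y) * (u * exp X * exp Y) := by
          rw [mul_assoc u, star_mul_self_unitary_mul hu]
      _ = x * star x := by rw [hx', star_star]

/-- Let `E : A → B` be a conditional expectation on a unital C*-algebra,
`p_E` the self-adjoint elements of `ker E`, `p_B` the self-adjoint elements of `B`. If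
`Φ(u, X, Y) = u e^X e^Y` is a bijection from `U_A × p_E × p_B` onto the invertibles of
`A`, then `Ψ(X, Y) = e^Y e^{2X} e^Y` is a bijection from `p_E × p_B` onto the positive
invertible elements (those of the form `g g*` with `g` invertible). -/
theorem stmt_16 (A : Type*) [NormedRing A] [StarRing A] [CStarRing A]
    [NormedAlgebra ℂ A] [CompleteSpace A] [StarModule ℂ A]
    (B : StarSubalgebra ℂ A) (E : A →ₗ[ℂ] A)
    (hrange : ∀ a : A, E a ∈ B)
    (hproj : ∀ b ∈ B, E b = b)
    (hnorm : ∀ a : A, ‖E a‖ ≤ ‖a‖)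
    (hbimod : ∀ b₁ ∈ B, ∀ b₂ ∈ B, ∀ a : A, E (b₁ * a * b₂) = b₁ * E a * b₂)
    (hstar : ∀ a : A, E (star a) = star (E a))
    (hΦ : Set.BijOn
      (fun t : A × A × A => t.1 * NormedSpace.exp t.2.1 * NormedSpace.exp t.2.2)
      ((unitary A : Set A) ×ˢ {X : A | E X = 0 ∧ IsSelfAdjoint X} ×ˢ
        {Y : A | Y ∈ B ∧ IsSelfAdjoint Y})
      {x : A | IsUnit x}) :
    Set.BijOn
      (fun t : A × A =>
        NormedSpace.exp t.2 * NormedSpace.exp (2 • t.1) * NormedSpace.exp t.2)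
      ({X : A | E X = 0 ∧ IsSelfAdjoint X} ×ˢ {Y : A | Y ∈ B ∧ IsSelfAdjoint Y})
      {h : A | ∃ x : A, IsUnit x ∧ h = x * star x} :=
  stmt_16_general A B E hΦ
end
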